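/- For every integer k ≥ 0 the function τ ↦ p_k(τ) agrees on all of ℂ with a polynomial in τ of degree exactly 3k; in particular, p_0(τ) = 1 for all τ ∈ ℂ. -/

import Mathlib

open Complex Polynomial

/-- `p_k(τ) = (1/(2πi)) ∮_{|t| = r} exp(Σ_{n=1}^∞ (1/n − τ²/(n+2)) (−τ t)^n) t^{−k−1} dt`,
where `r = 1/(|τ|³ + 1)`. -/
noncomputable def pFun (k : ℕ) (τ : ℂ) : ℂ :=
  (2 * Real.pi * Complex.I)⁻¹ *
    ∮ t in C(0, (‖τ‖ ^ 3 + 1)⁻¹),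
      Complex.exp (∑' n : ℕ,
        (1 / ((n : ℂ) + 1) - τ ^ 2 / ((n : ℂ) + 3)) * (-τ * t) ^ (n + 1)) / t ^ (k + 1)

/-!
The exponent is a power series `∑ aₙ(τ) tⁿ` whose coefficients are polynomials in `τ`, with
`a₀ = 0` and `deg aₙ = n + 2` for `n ≥ 1`, and it converges for `|τ t| < 1`, in particular on the
contour. The integral is Cauchy's formula for the `t ^ k`-coefficient of its exponential, which
composing with the exponential series computes as a sum over compositions `(b₁, …, b_ℓ)` of `k`
of `(1/ℓ!) ∏ a_{bᵢ}(τ)`. That summand has degree `k + 2ℓ`, maximal only for the composition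
into `k` ones, so the sum has degree `3k`; for `k = 0` the empty composition contributes `1`.
-/

open FormalMultilinearSeries NNReal ENNReal Metric

section Analytic

variable {𝕜 : Type*} [NontriviallyNormedField 𝕜]

theorem FormalMultilinearSeries.coeff_expSeries_comp_ofScalars (a : ℕ → 𝕜) (k : ℕ) :
    ((NormedSpace.expSeries 𝕜 𝕜).comp (ofScalars 𝕜 a)).coeff k =
      ∑ c : Composition k, (c.length.factorial : 𝕜)⁻¹ * ∏ i, a (c.blocksFun i) := by
  rw [FormalMultilinearSeries.coeff, FormalMultilinearSeries.comp, sum_apply]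
  refine Finset.sum_congr rfl fun c _ => ?_
  have hblock : ∀ i, ofScalars 𝕜 a (c.blocksFun i) (fun _ => 1) = a (c.blocksFun i) := by
    simp
  simp [compAlongComposition_apply, applyComposition, Function.comp_def, hblock,
    NormedSpace.expSeries, List.prod_ofFn]

theorem FormalMultilinearSeries.inv_le_radius_ofScalars {a : ℕ → 𝕜} {C : ℝ} {ρ : ℝ≥0}
    (ha : ∀ n, ‖a n‖ ≤ C * ρ ^ n) : (ρ : ℝ≥0∞)⁻¹ ≤ (ofScalars 𝕜 a).radius := by
  refine ENNReal.le_of_forall_nnreal_lt fun s hs => le_radius_of_bound _ C fun n => ?_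
  have hsρ : (s : ℝ) * ρ ≤ 1 := by
    exact_mod_cast ENNReal.le_inv_iff_mul_le.1 hs.le
  calc ‖ofScalars 𝕜 a n‖ * (s : ℝ) ^ n = ‖a n‖ * s ^ n := by rw [ofScalars_norm]
    _ ≤ C * ρ ^ n * s ^ n := by gcongr; exact ha n
    _ = C * (s * ρ) ^ n := by ring
    _ ≤ C := mul_le_of_le_one_right ((norm_nonneg _).trans (by simpa using ha 0))
        (pow_le_one₀ (by positivity) hsρ)

theorem FormalMultilinearSeries.hasFPowerSeriesOnBall_tsum_ofScalars [CompleteSpace 𝕜]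
    {a : ℕ → 𝕜} (h : 0 < (ofScalars 𝕜 a).radius) :
    HasFPowerSeriesOnBall (fun z => ∑' n, a n * z ^ n) (ofScalars 𝕜 a) 0
      (ofScalars 𝕜 a).radius := by
  convert (ofScalars 𝕜 a).hasFPowerSeriesOnBall h using 1
  funext z
  simp [FormalMultilinearSeries.sum, mul_comm]

end Analytic

theorem enorm_lt_inv_enorm_of_norm_mul_lt_one {𝕜 : Type*} [NormedDivisionRing 𝕜] {s t : 𝕜}
    (h : ‖s‖ * ‖t‖ < 1) : ‖t‖ₑ < ‖s‖ₑ⁻¹ := by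
  rw [← one_div, ENNReal.lt_div_iff_mul_lt (Or.inr enorm_ne_top) (Or.inl enorm_ne_top),
    ← enorm_mul, ← ofReal_norm, ENNReal.ofReal_lt_one, norm_mul, mul_comm]
  exact h

theorem HasFPowerSeriesAt.coeff_eq_circleIntegral {f : ℂ → ℂ}
    {p : FormalMultilinearSeries ℂ ℂ ℂ} {c : ℂ} {R : ℝ} (hR : 0 < R)
    (hf : DifferentiableOn ℂ f (closedBall c R)) (hp : HasFPowerSeriesAt f p c) (n : ℕ) :
    p.coeff n = (2 * Real.pi * I)⁻¹ * ∮ z in C(c, R), f z / (z - c) ^ (n + 1) := by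
  lift R to ℝ≥0 using hR.le
  have hcauchy := (hf.hasFPowerSeriesOnBall hR).hasFPowerSeriesAt
  rw [← hcauchy.eq_formalMultilinearSeries hp]
  change cauchyPowerSeries f c R n (fun _ => 1) = _
  rw [cauchyPowerSeries_apply, smul_eq_mul]
  congr 1
  refine circleIntegral.integral_congr hR.le fun z _ => ?_
  simp only [smul_eq_mul, div_eq_mul_inv, pow_succ', mul_inv]
  ring

theorem mul_inv_pow_three_add_one_lt_one {x : ℝ} (hx : 0 ≤ x) : x * (x ^ 3 + 1)⁻¹ < 1 := by
  rw [← div_eq_mul_inv, div_lt_one (by positivity)]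
  nlinarith [mul_nonneg hx (sq_nonneg (x - 1)), sq_nonneg (2 * x - 1)]

/-- The coefficient of `t ^ n` in the exponent of the integrand of `pFun`, as a polynomial
in `τ`. -/
noncomputable def exponentCoeff : ℕ → ℂ[X]
  | 0 => 0
  | m + 1 => (C ((m + 1 : ℂ)⁻¹) - C ((m + 3 : ℂ)⁻¹) * X ^ 2) * (-X) ^ (m + 1)

theorem eval_exponentCoeff_succ (τ : ℂ) (m : ℕ) :
    (exponentCoeff (m + 1)).eval τ =
      (1 / ((m : ℂ) + 1) - τ ^ 2 / ((m : ℂ) + 3)) * (-τ) ^ (m + 1) := by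
  simp only [exponentCoeff, eval_mul, eval_sub, eval_C, eval_pow, eval_neg, eval_X, one_div]
  ring

theorem exponent_eq_tsum_eval_exponentCoeff (τ t : ℂ) :
    ∑' n : ℕ, (1 / ((n : ℂ) + 1) - τ ^ 2 / ((n : ℂ) + 3)) * (-τ * t) ^ (n + 1) =
      ∑' n, (exponentCoeff n).eval τ * t ^ n := by
  have hsupp : Function.support (fun n => (exponentCoeff n).eval τ * t ^ n) ⊆
      Set.range (· + 1) := by
    rintro (_ | m) h
    · simp [exponentCoeff] at h
    · exact ⟨m, rfl⟩
  rw [← (add_left_injective 1).tsum_eq hsupp]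
  refine tsum_congr fun m => ?_
  rw [eval_exponentCoeff_succ, mul_pow]
  ring

theorem norm_eval_exponentCoeff_le (τ : ℂ) (n : ℕ) :
    ‖(exponentCoeff n).eval τ‖ ≤ (1 + ‖τ‖ ^ 2) * ‖τ‖ ^ n := by
  cases n with
  | zero => simp [exponentCoeff]; positivity
  | succ m =>
    have h1 : ‖(m : ℂ) + 1‖ = m + 1 := by exact_mod_cast Complex.norm_natCast (m + 1)
    have h3 : ‖(m : ℂ) + 3‖ = m + 3 := by exact_mod_cast Complex.norm_natCast (m + 3)
    rw [eval_exponentCoeff_succ, norm_mul, norm_pow, norm_neg]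
    gcongr
    calc _ ≤ ‖1 / ((m : ℂ) + 1)‖ + ‖τ ^ 2 / ((m : ℂ) + 3)‖ := norm_sub_le _ _
      _ = 1 / (m + 1) + ‖τ‖ ^ 2 / (m + 3) := by
        rw [norm_div, norm_div, norm_one, norm_pow, h1, h3]
      _ ≤ 1 + ‖τ‖ ^ 2 := by
        gcongr
        · exact div_le_one_of_le₀ (by linarith [m.cast_nonneg (α := ℝ)]) (by positivity)
        · exact div_le_self (by positivity) (by linarith [m.cast_nonneg (α := ℝ)])

theorem degree_exponentCoeff {n : ℕ} (hn : n ≠ 0) :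
    (exponentCoeff n).degree = (n + 2 : ℕ) := by
  obtain ⟨m, rfl⟩ := Nat.exists_eq_succ_of_ne_zero hn
  have hquad : (C ((m + 1 : ℂ)⁻¹) - C ((m + 3 : ℂ)⁻¹) * X ^ 2).degree = 2 := by
    have hX2 : (C ((m + 3 : ℂ)⁻¹) * X ^ 2).degree = 2 :=
      degree_C_mul_X_pow 2 (inv_ne_zero (by norm_cast))
    rw [degree_sub_eq_right_of_degree_lt (hX2 ▸ degree_C_le.trans_lt (by norm_num)), hX2]
  rw [exponentCoeff, degree_mul, hquad, degree_pow, degree_neg, degree_X, nsmul_one]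
  norm_cast
  omega

/-- The contribution of a composition `c` of `k` to the `t ^ k`-coefficient of
`exp (∑ aₙ tⁿ)`, with `aₙ = exponentCoeff n`. -/
noncomputable def pPolyTerm {k : ℕ} (c : Composition k) : ℂ[X] :=
  C ((c.length.factorial : ℂ)⁻¹) * ∏ i, exponentCoeff (c.blocksFun i)

noncomputable def pPoly (k : ℕ) : ℂ[X] :=
  ∑ c : Composition k, pPolyTerm c

theorem degree_pPolyTerm {k : ℕ} (c : Composition k) :
    (pPolyTerm c).degree = (k + 2 * c.length : ℕ) := by
  rw [pPolyTerm, degree_C_mul (inv_ne_zero (Nat.cast_ne_zero.2 c.length.factorial_ne_zero)),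
    degree_prod, Finset.sum_congr rfl fun i _ =>
      degree_exponentCoeff (Nat.one_le_iff_ne_zero.1 (c.one_le_blocksFun i)),
    ← Nat.cast_sum, Finset.sum_add_distrib, c.sum_blocksFun]
  simp [mul_comm]

theorem degree_pPoly (k : ℕ) : (pPoly k).degree = (3 * k : ℕ) := by
  classical
  have hones : (pPolyTerm (Composition.ones k)).degree = (3 * k : ℕ) := by
    rw [degree_pPolyTerm, Composition.ones_length]
    ring_nf
  have hrest : (∑ c ∈ Finset.univ.erase (Composition.ones k), pPolyTerm c).degree <
      (3 * k : ℕ) := by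
    refine (degree_sum_le _ _).trans_lt
      ((Finset.sup_lt_iff (WithBot.bot_lt_coe _)).2 fun c hc => ?_)
    have hlen : c.length < k := c.length_le.lt_of_ne fun h =>
      (Finset.mem_erase.1 hc).1 (Composition.eq_ones_iff_length.2 h)
    rw [degree_pPolyTerm]
    exact_mod_cast (by omega : k + 2 * c.length < 3 * k)
  rw [pPoly, ← Finset.add_sum_erase _ _ (Finset.mem_univ (Composition.ones k)),
    degree_add_eq_left_of_degree_lt (hones ▸ hrest), hones]

theorem pPoly_zero : pPoly 0 = 1 := by
  rw [pPoly, Finset.sum_eq_single (Composition.ones 0)]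
  · simp [pPolyTerm]
  · exact fun c _ hc => (hc (Composition.eq_ones_iff_length.2 (Nat.le_zero.1 c.length_le))).elim
  · simp

theorem eval_pPoly (k : ℕ) (τ : ℂ) :
    (pPoly k).eval τ = ((NormedSpace.expSeries ℂ ℂ).comp
      (ofScalars ℂ fun n => (exponentCoeff n).eval τ)).coeff k := by
  simp [coeff_expSeries_comp_ofScalars, pPoly, pPolyTerm, eval_finsetSum, eval_prod]

theorem pFun_eq_eval_pPoly (k : ℕ) (τ : ℂ) : pFun k τ = (pPoly k).eval τ := by
  set a : ℕ → ℂ := fun n => (exponentCoeff n).eval τ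
  set g : ℂ → ℂ := fun t => ∑' n, a n * t ^ n
  have hrad : ‖τ‖ₑ⁻¹ ≤ (ofScalars ℂ a).radius :=
    inv_le_radius_ofScalars (ρ := ‖τ‖₊) (norm_eval_exponentCoeff_le τ)
  have hg : HasFPowerSeriesOnBall g (ofScalars ℂ a) 0 (ofScalars ℂ a).radius :=
    hasFPowerSeriesOnBall_tsum_ofScalars ((ENNReal.inv_pos.2 enorm_ne_top).trans_le hrad)
  have hg0 : g 0 = 0 := by
    simp only [g]
    rw [tsum_eq_single 0 fun n hn => by simp [hn]]
    simp [a, exponentCoeff]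
  have hexp : HasFPowerSeriesAt (exp ∘ g)
      ((NormedSpace.expSeries ℂ ℂ).comp (ofScalars ℂ a)) 0 := by
    rw [Complex.exp_eq_exp_ℂ]
    exact (hg0 ▸ NormedSpace.exp_hasFPowerSeriesAt_zero).comp hg.hasFPowerSeriesAt
  have hr : (0 : ℝ) < (‖τ‖ ^ 3 + 1)⁻¹ := by positivity
  have hdiff : DifferentiableOn ℂ (exp ∘ g) (closedBall 0 (‖τ‖ ^ 3 + 1)⁻¹) := by
    intro t ht
    have hτt : ‖τ‖ * ‖t‖ < 1 := by
      rw [mem_closedBall_zero_iff] at ht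
      calc ‖τ‖ * ‖t‖ ≤ ‖τ‖ * (‖τ‖ ^ 3 + 1)⁻¹ := by gcongr
        _ < 1 := mul_inv_pow_three_add_one_lt_one (norm_nonneg τ)
    have hmem : t ∈ eball 0 (ofScalars ℂ a).radius :=
      mem_eball_zero_iff.2 ((enorm_lt_inv_enorm_of_norm_mul_lt_one hτt).trans_le hrad)
    exact (hg.analyticAt_of_mem hmem).cexp.differentiableAt.differentiableWithinAt
  rw [eval_pPoly, hexp.coeff_eq_circleIntegral hr hdiff, pFun]
  simp only [exponent_eq_tsum_eval_exponentCoeff, sub_zero]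
  rfl

/-- For every `k ≥ 0`, `τ ↦ p_k(τ)` agrees on all of `ℂ` with a polynomial of degree
exactly `3k`; in particular `p_0(τ) = 1` for all `τ`. -/
theorem pFun_is_polynomial :
    (∀ k : ℕ, ∃ P : Polynomial ℂ,
      P.degree = ((3 * k : ℕ) : WithBot ℕ) ∧ ∀ τ : ℂ, pFun k τ = P.eval τ) ∧
    (∀ τ : ℂ, pFun 0 τ = 1) :=
  ⟨fun k => ⟨pPoly k, degree_pPoly k, pFun_eq_eval_pPoly k⟩,
    fun τ => by rw [pFun_eq_eval_pPoly, pPoly_zero, eval_one]⟩
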